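/- arXiv:2409.09592 — 2 statements merged into one kernel-verified Lean document; each statement's English description precedes it below -/
import Mathlib

section
/- In rotation dequeuing with N queues and cycle size T, a packet enqueued to queue (currQ + sid) mod N at a time when currQ is transmitting, with 1 ≤ sid ≤ N-1, waits at least (sid-1)·T and at most sid·T before its queue begins transmission; hence the per-hop queuing delay is bounded by sid·T and the per-hop queuing-delay uncertainty is at most T. -/
theorem stmt8 (N sid k0 : ℕ) (hN : 2 ≤ N) (hs1 : 1 ≤ sid) (hsN : sid ≤ N - 1)
    (T t : ℝ) (hT : 0 < T)
    (ht1 : (k0 : ℝ) * T ≤ t) (ht2 : t < ((k0 : ℝ) + 1) * T)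
    (wait : ℝ) (hw : wait = ((k0 + sid : ℕ) : ℝ) * T - t) :
    (((sid : ℝ) - 1) * T ≤ wait ∧ wait ≤ (sid : ℝ) * T) ∧
    (sid : ℝ) * T - ((sid : ℝ) - 1) * T = T := by
  push_cast at hw
  constructor
  · constructor <;> [nlinarith; nlinarith]
  · ring
end

section
/- If a flow is (b, r)-token-bucket constrained and a cyclic scheduler with cycle length T and per-cycle capacity c ≥ r·T admits at most c bits per cycle, then the backlog of the flow's unserved bits never exceeds b: i.e., for all n, Σ_{k<n} a_k - Σ_{k<n} d_k ≤ b, where a_k are arrivals and d_k = min(backlog + a_k, c) are departures in cycle k. -/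
/-!
The backlog telescopes to cumulative arrivals minus cumulative departures. Looking back from cycle
`n` to the last cycle `m` at which the server cleared its queue, it served the full capacity `c` in
every cycle of `[m, n)`, so the backlog is the arrivals in `[m, n)` minus `(n - m) c`. The token
bucket bounds those arrivals by `b + r (n - m) T ≤ b + (n - m) c`.
-/

open Finset

theorem sum_range_sub_sum_range_eq_of_backlog {G : Type*} [AddCommGroup G] {a d B : ℕ → G}
    (hB0 : B 0 = 0) (hB : ∀ k, B (k + 1) = B k + a k - d k) (n : ℕ) :
    ∑ k ∈ range n, a k - ∑ k ∈ range n, d k = B n := by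
  rw [← sum_sub_distrib, ← sub_zero (B n), ← hB0, ← sum_range_sub]
  exact sum_congr rfl fun k _ ↦ by rw [hB k]; abel

/-- Lindley's recursion: `m` is the first cycle after the queue was last cleared. -/
theorem exists_backlog_eq_sum_Ico_sub_nsmul {G : Type*} [AddCommGroup G] [LinearOrder G]
    {a B : ℕ → G} {c : G} (hB0 : B 0 = 0)
    (hB : ∀ k, B (k + 1) = B k + a k - min (B k + a k) c) (n : ℕ) :
    ∃ m ≤ n, B n = ∑ k ∈ Ico m n, a k - (n - m) • c := by
  induction n with
  | zero => exact ⟨0, le_rfl, by simp [hB0]⟩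
  | succ n ih =>
    obtain ⟨m, hmn, hBn⟩ := ih
    rcases le_total (B n + a n) c with hcleared | hbusy
    · exact ⟨n + 1, le_rfl, by simp [hB n, min_eq_left hcleared]⟩
    · refine ⟨m, hmn.trans n.le_succ, ?_⟩
      rw [hB n, min_eq_right hbusy, sum_Ico_succ_top hmn, hBn, Nat.sub_add_comm hmn, succ_nsmul]
      abel

theorem sum_Ico_sub_nsmul_le_of_tokenBucket {a : ℕ → ℝ} {b r T c : ℝ} (hc : r * T ≤ c)
    (htb : ∀ m n : ℕ, m ≤ n → ∑ k ∈ Ico m n, a k ≤ b + r * ((n : ℝ) - (m : ℝ)) * T)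
    {m n : ℕ} (hmn : m ≤ n) :
    ∑ k ∈ Ico m n, a k - (n - m) • c ≤ b := by
  have hlen : (0 : ℝ) ≤ (n : ℝ) - m := sub_nonneg.mpr (Nat.cast_le.mpr hmn)
  have hserved : r * ((n : ℝ) - m) * T ≤ (n - m) • c := by
    rw [nsmul_eq_mul, Nat.cast_sub hmn, mul_right_comm, mul_comm _ c]
    exact mul_le_mul_of_nonneg_right hc hlen
  linarith [htb m n hmn]

theorem stmt12_general (b r T c : ℝ) (hc : r * T ≤ c)
    (a : ℕ → ℝ)
    (htb : ∀ m n : ℕ, m ≤ n →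
      ∑ k ∈ Finset.Ico m n, a k ≤ b + r * ((n : ℝ) - (m : ℝ)) * T)
    (B d : ℕ → ℝ)
    (hB0 : B 0 = 0)
    (hd : ∀ k, d k = min (B k + a k) c)
    (hBk : ∀ k, B (k + 1) = B k + a k - d k) :
    ∀ n, (∑ k ∈ Finset.range n, a k) - (∑ k ∈ Finset.range n, d k) ≤ b := by
  intro n
  rw [sum_range_sub_sum_range_eq_of_backlog hB0 hBk n]
  obtain ⟨m, hmn, hBn⟩ :=
    exists_backlog_eq_sum_Ico_sub_nsmul hB0 (fun k ↦ hd k ▸ hBk k) n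
  exact hBn ▸ sum_Ico_sub_nsmul_le_of_tokenBucket hc htb hmn

theorem stmt12 (b r T c : ℝ) (hb : 0 ≤ b) (hr : 0 ≤ r) (hT : 0 < T) (hc : r * T ≤ c)
    (a : ℕ → ℝ) (ha : ∀ k, 0 ≤ a k)
    (htb : ∀ m n : ℕ, m ≤ n →
      ∑ k ∈ Finset.Ico m n, a k ≤ b + r * ((n : ℝ) - (m : ℝ)) * T)
    (B d : ℕ → ℝ)
    (hB0 : B 0 = 0)
    (hd : ∀ k, d k = min (B k + a k) c)
    (hBk : ∀ k, B (k + 1) = B k + a k - d k) :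
    ∀ n, (∑ k ∈ Finset.range n, a k) - (∑ k ∈ Finset.range n, d k) ≤ b :=
  stmt12_general b r T c hc a htb B d hB0 hd hBk
end
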